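/- arXiv:1608.03647 — 2 statements merged into one kernel-verified Lean document; each statement's English description precedes it below -/
import Mathlib

section
/- If V is a valid value function on a deterministic task, then V⟨s⟩ ≤ optval(s) for every state s. -/
variable {S A : Type*}

/-- The state value `V⟨s⟩ = max_{b ∈ A} V(s, b)`. -/
def sval [Fintype A] (V : S → A → ℕ) (s : S) : ℕ := Finset.univ.sup (V s)

/-- The trajectory of states visited in a deterministic task, starting at `s`
and following the action stream `as`. -/
def traj (δ : S → A → S) (s : S) (as : ℕ → A) : ℕ → S
  | 0 => s
  | i + 1 => δ (traj δ s as i) (as i)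

/-- The value of the action-path of length `n` starting at `s` and following `as`:
`pval p = max_i clamp(R(sᵢ,aᵢ) − i·K)` (1-based `i`). -/
def pathVal (δ : S → A → S) (R : S → A → ℕ) (K : ℕ) (s : S) (as : ℕ → A) (n : ℕ) : ℕ :=
  (Finset.range n).sup fun i => ((R (traj δ s as i) (as i) : ℤ) - ((i : ℕ) + 1) * K).toNat

/-- The optimal value of a state: the largest path value among action-paths starting at `s`. -/
noncomputable def optval (δ : S → A → S) (R : S → A → ℕ) (K : ℕ) (s : S) : ℕ :=
  sSup {v | ∃ (n : ℕ) (as : ℕ → A), 0 < n ∧ v = pathVal δ R K s as n}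

/-- `V` is valid: `V(s,a) ≤ clamp(max(V⟨δ(s,a)⟩, R(s,a)) − K)` for all `(s,a)`. -/
def validV [Fintype A] (δ : S → A → S) (R : S → A → ℕ) (K : ℕ) (V : S → A → ℕ) : Prop :=
  ∀ s a, V s a ≤ (max ((sval V (δ s a) : ℤ)) ((R s a : ℤ)) - (K : ℤ)).toNat

/-- `V` is consistent: for every state `s` and every preferred action `a` at `s`,
`V⟨s⟩ = clamp(max(V⟨δ(s,a)⟩, R(s,a)) − K)`. -/
def consistentV [Fintype A] (δ : S → A → S) (R : S → A → ℕ) (K : ℕ) (V : S → A → ℕ) : Prop :=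
  ∀ s a, V s a = sval V s →
    sval V s = (max ((sval V (δ s a) : ℤ)) ((R s a : ℤ)) - (K : ℤ)).toNat

/-! Following any action `a` from `s` and then an optimal path from `δ(s,a)` shows that `optval`
satisfies the validity inequality in reverse: `clamp(max(optval(δ(s,a)), R(s,a)) − K) ≤ optval(s)`.
A valid `V` lies below every such super-solution. Take a counterexample `s` with the largest
`V⟨s⟩` and a maximising action `a`. If `δ(s,a)` is no counterexample, monotonicity of the right-hand
side gives `V⟨s⟩ ≤ optval(s)`; otherwise `V⟨δ(s,a)⟩ ≤ V⟨s⟩ < V⟨s⟩ + K` because `K ≥ 1`, so the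
reward `R(s,a)` alone must account for `V⟨s⟩`, and it is also bounded by `optval(s)`. -/

section

variable (δ : S → A → S) (R : S → A → ℕ) (K : ℕ)

/-- The right-hand side `clamp(max(U⟨δ(s,a)⟩, R(s,a)) − K)` of the validity condition, for an
arbitrary state value `U`. -/
def backup (U : S → ℕ) (s : S) (a : A) : ℕ :=
  (max ((U (δ s a) : ℤ)) ((R s a : ℤ)) - (K : ℤ)).toNat

theorem backup_mono {U W : S → ℕ} {s : S} {a : A} (h : U (δ s a) ≤ W (δ s a)) :
    backup δ R K U s a ≤ backup δ R K W s a := by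
  unfold backup
  omega

theorem validV.exists_sval_le_backup [Fintype A] {V : S → A → ℕ} (hV : validV δ R K V) {s : S}
    (hs : 0 < sval V s) : ∃ a, sval V s ≤ backup δ R K (sval V) s a := by
  obtain ⟨b, -, -⟩ := Finset.lt_sup_iff.mp hs
  obtain ⟨a, -, ha⟩ := Finset.exists_mem_eq_sup _ ⟨b, Finset.mem_univ b⟩ (V s)
  exact ⟨a, ha.le.trans (hV s a)⟩

theorem le_of_le_backup_of_backup_le [Fintype S] (hK : 1 ≤ K) {W U : S → ℕ}
    (hW : ∀ s, 0 < W s → ∃ a, W s ≤ backup δ R K W s a)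
    (hU : ∀ s a, backup δ R K U s a ≤ U s) (s : S) : W s ≤ U s := by
  by_contra! hs
  obtain ⟨t, ht, hmax⟩ :=
    (Finset.univ.filter fun s => U s < W s).exists_max_image W ⟨s, by simpa using hs⟩
  simp only [Finset.mem_filter, Finset.mem_univ, true_and] at ht hmax
  obtain ⟨a, ha⟩ := hW t (by omega)
  have hbackup : W t ≤ backup δ R K U t a := by
    by_cases hnext : W (δ t a) ≤ U (δ t a)
    · exact ha.trans (backup_mono δ R K hnext)
    · have := hmax _ (not_le.mp hnext)
      unfold backup at ha ⊢
      omega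
  exact (hbackup.trans (hU t a)).not_gt ht

theorem traj_cons_succ (s : S) (a : A) (as : ℕ → A) :
    ∀ i, traj δ s (Stream'.cons a as) (i + 1) = traj δ (δ s a) as i
  | 0 => rfl
  | i + 1 => congrArg (δ · (as i)) (traj_cons_succ s a as i)

theorem pathVal_one (s : S) (as : ℕ → A) :
    pathVal δ R K s as 1 = ((R s (as 0) : ℤ) - K).toNat := by
  simp [pathVal, traj]

theorem pathVal_le_pathVal_cons_add (s : S) (a : A) (as : ℕ → A) (n : ℕ) :
    pathVal δ R K (δ s a) as n ≤ pathVal δ R K s (Stream'.cons a as) (n + 1) + K := by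
  refine Finset.sup_le fun j hj => ?_
  have hterm := Finset.le_sup (f := fun i => ((R (traj δ s (Stream'.cons a as) i)
    (Stream'.cons a as i) : ℤ) - ((i : ℕ) + 1) * K).toNat)
    (Finset.mem_range_succ_iff.mpr (Finset.mem_range.mp hj))
  have hcons : Stream'.cons a as (j + 1) = as j := rfl
  simp only [traj_cons_succ, hcons] at hterm
  change _ ≤ pathVal δ R K s (Stream'.cons a as) (n + 1) at hterm
  push_cast at hterm ⊢
  have : ((j : ℤ) + 1 + 1) * K = ((j : ℤ) + 1) * K + K := by ring
  omega

variable [Fintype S] [Fintype A]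

theorem pathVal_le_sup_reward (s : S) (as : ℕ → A) (n : ℕ) :
    pathVal δ R K s as n ≤ Finset.univ.sup fun p : S × A => R p.1 p.2 := by
  refine Finset.sup_le fun i _ => ?_
  have hR := Finset.le_sup (f := fun p : S × A => R p.1 p.2) (Finset.mem_univ (traj δ s as i, as i))
  have hK : (0 : ℤ) ≤ ((i : ℤ) + 1) * K := by positivity
  simp only at hR
  omega

theorem pathVal_le_optval (s : S) (as : ℕ → A) {n : ℕ} (hn : 0 < n) :
    pathVal δ R K s as n ≤ optval δ R K s :=
  le_csSup ⟨_, by rintro v ⟨m, bs, -, rfl⟩; exact pathVal_le_sup_reward δ R K s bs m⟩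
    ⟨n, as, hn, rfl⟩

theorem optval_le_optval_add (s : S) (a : A) :
    optval δ R K (δ s a) ≤ optval δ R K s + K := by
  refine csSup_le' ?_
  rintro v ⟨n, as, -, rfl⟩
  exact (pathVal_le_pathVal_cons_add δ R K s a as n).trans
    (Nat.add_le_add_right (pathVal_le_optval δ R K s _ n.succ_pos) K)

theorem backup_optval_le (s : S) (a : A) : backup δ R K (optval δ R K) s a ≤ optval δ R K s := by
  have hstep := optval_le_optval_add δ R K s a
  have hreward := pathVal_le_optval δ R K s (fun _ => a) one_pos
  rw [pathVal_one] at hreward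
  unfold backup
  omega

end

/-- If `V` is valid on a deterministic task, then `V⟨s⟩ ≤ optval(s)` for every state. -/
theorem valid_sval_le_optval [Fintype S] [Fintype A]
    (δ : S → A → S) (R : S → A → ℕ) (K : ℕ) (hK : 1 ≤ K)
    (V : S → A → ℕ) (hvalid : validV δ R K V) :
    ∀ s : S, sval V s ≤ optval δ R K s :=
  le_of_le_backup_of_backup_le δ R K hK (fun _ => hvalid.exists_sval_le_backup δ R K)
    (backup_optval_le δ R K)
end

section
/- If all initial values are strictly below M, then along any Value-Ramp run on a navigation problem with reward quantities in {0, M} and M > K, every encountered value function V satisfies max over all (s,a) of V(s,a) < M. -/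
variable {S A : Type*}

lemma le_sval [Fintype A] (V : S → A → ℕ) (s : S) (b : A) : V s b ≤ sval V s :=
  Finset.le_sup (Finset.mem_univ b)

lemma sval_lt [Fintype A] {V : S → A → ℕ} {s : S} {M : ℕ} (hM : 0 < M)
    (h : ∀ b, V s b < M) : sval V s < M :=
  (Finset.sup_lt_iff hM).2 fun b _ => h b

/-- Since `v ≤ w`, the ramp increment is at most `max q r - K ≤ M - K`, so the clamped
value stays below `M` as soon as `K ≥ 1`. -/
lemma ramp_toNat_lt {v w q r K M : ℕ} (hM : 0 < M) (hK : 1 ≤ K) (hvw : v ≤ w)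
    (hq : q < M) (hr : r ≤ M) :
    ((v : ℤ) + max (q : ℤ) (r : ℤ) - K - w).toNat < M := by
  omega

theorem values_stay_below_M_general [Fintype A]
    (R : S → A → ℕ) (K M : ℕ) (hK : 1 ≤ K) (hMK : K < M)
    (hR : ∀ s a, R s a = 0 ∨ R s a = M)
    (st : ℕ → S) (V : ℕ → S → A → ℕ) (act : ℕ → A)
    (hupd : ∀ i, V (i + 1) (st i) (act i) =
      ((V i (st i) (act i) : ℤ) + max ((sval (V i) (st (i + 1)) : ℤ)) ((R (st i) (act i) : ℤ))
        - (K : ℤ) - (sval (V i) (st i) : ℤ)).toNat)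
    (hoth : ∀ i t b, (t, b) ≠ (st i, act i) → V (i + 1) t b = V i t b)
    (hinit : ∀ t b, V 0 t b < M) :
    ∀ i t b, V i t b < M := by
  have hM : 0 < M := by omega
  intro i
  induction i with
  | zero => exact hinit
  | succ i ih =>
    intro t b
    by_cases hexec : (t, b) = (st i, act i)
    · obtain ⟨rfl, rfl⟩ := Prod.mk.inj hexec
      rw [hupd i]
      exact ramp_toNat_lt hM hK (le_sval _ _ _) (sval_lt hM (ih _))
        (by rcases hR (st i) (act i) with h | h <;> omega)
    · rw [hoth i t b hexec]
      exact ih t b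

/-- On a navigation problem with rewards in `{0, M}` and `M > K`, if all initial values
are strictly below `M`, then along any Value-Ramp run every encountered value stays
strictly below `M`. -/
theorem values_stay_below_M [Fintype S] [Fintype A] [Nonempty S] [Nonempty A]
    (tr : S → A → Finset S) (htr : ∀ s a, (tr s a).Nonempty)
    (R : S → A → ℕ) (K M : ℕ) (hK : 1 ≤ K) (hMK : K < M)
    (hR : ∀ s a, R s a = 0 ∨ R s a = M)
    (st : ℕ → S) (V : ℕ → S → A → ℕ) (act : ℕ → A)
    (hstep : ∀ i, st (i + 1) ∈ tr (st i) (act i))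
    (hupd : ∀ i, V (i + 1) (st i) (act i) =
      ((V i (st i) (act i) : ℤ) + max ((sval (V i) (st (i + 1)) : ℤ)) ((R (st i) (act i) : ℤ))
        - (K : ℤ) - (sval (V i) (st i) : ℤ)).toNat)
    (hoth : ∀ i t b, (t, b) ≠ (st i, act i) → V (i + 1) t b = V i t b)
    (hinit : ∀ t b, V 0 t b < M) :
    ∀ i t b, V i t b < M :=
  values_stay_below_M_general R K M hK hMK hR st V act hupd hoth hinit
end
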